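/- Let X be a zero-mean wide-sense stationary Gaussian signal of length L with periodic boundary conditions, whose power spectrum S_X satisfies S_X(0)=0 (and S_X(L/2)=0 if L is even). Then its discrete analytic signal Z, obtained by keeping only positive-frequency Fourier coefficients (doubled), is a circular complex Gaussian random vector, i.e. its relation matrix R_Z(t,s)=E[Z_t Z_s] vanishes identically. -/

import Mathlib

open MeasureTheory ProbabilityTheory Complex Finset
noncomputable section

/-- The character `e^{2πin/L}`. -/
def fchar (L : ℕ) (n : ℤ) : ℂ := Complex.exp (2 * Real.pi * Complex.I * n / L)

/-- Unnormalized discrete Fourier transform of a signal of length `L`. -/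
def dft {L : ℕ} [NeZero L] (x : ZMod L → ℂ) (k : ZMod L) : ℂ :=
  ∑ t : ZMod L, x t * fchar L (-((k.val : ℤ) * t.val))

/-- The set of positive frequencies `I_L^+ \ {0}`, i.e. `[1, L/2]` for even `L`
and `[1, (L-1)/2]` for odd `L`. -/
def posFreq (L : ℕ) [NeZero L] : Finset (ZMod L) :=
  Finset.univ.filter fun k => 1 ≤ k.val ∧ 2 * k.val ≤ L

/-- A real random vector is (jointly) Gaussian if every linear combination of its
coordinates has a Gaussian law. -/
def IsRealGaussian {Ω : Type*} [MeasurableSpace Ω] (μ : Measure Ω) {ι : Type*} [Fintype ι]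
    (X : Ω → ι → ℝ) : Prop :=
  ∀ c : ι → ℝ, ∃ m v, Measure.map (fun ω => ∑ i, c i * X ω i) μ = gaussianReal m v

/-- A complex random vector is (jointly) Gaussian if every real-linear functional of its
coordinates has a Gaussian law. -/
def IsComplexGaussian {Ω : Type*} [MeasurableSpace Ω] (μ : Measure Ω) {ι : Type*} [Fintype ι]
    (X : Ω → ι → ℂ) : Prop :=
  ∀ c : ι → ℂ, ∃ m v, Measure.map (fun ω => (∑ i, c i * X ω i).re) μ = gaussianReal m v

/-- The discrete analytic signal of a real signal: zero the negative-frequency Fourier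
coefficients and double the positive ones. -/
def analyticSignal {L : ℕ} [NeZero L] (x : ZMod L → ℝ) (t : ZMod L) : ℂ :=
  (L : ℂ)⁻¹ * ∑ k ∈ posFreq L, 2 * dft (fun s => (x s : ℂ)) k * fchar L ((k.val : ℤ) * t.val)


/-!
`Z` is a fixed complex-linear image of `X`, hence Gaussian. Expanding `Z` in the Fourier basis,
`E[Z_t Z_s]` is a combination of the second moments `E[X̂_k X̂_l]` over positive frequencies
`k, l`. Stationarity turns each of these into `(∑_v e(-(k+l)v)) · Ŝ(k)`, and the character sum
vanishes unless `k + l ≡ 0 (mod L)`. For two positive frequencies that forces `k = l = L/2`,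
where the spectrum vanishes.
-/

open ZMod (stdAddChar)

section Fourier

variable {L : ℕ} [NeZero L]

lemma fchar_eq_stdAddChar (n : ℤ) : fchar L n = stdAddChar (n : ZMod L) :=
  (ZMod.stdAddChar_coe n).symm

lemma dft_eq_sum_stdAddChar (x : ZMod L → ℂ) (k : ZMod L) :
    dft x k = ∑ t, x t * stdAddChar (-(k * t)) := by
  simp [dft, fchar_eq_stdAddChar]

lemma sum_sum_stdAddChar_mul_circulant (c : ZMod L → ℂ) (k l : ZMod L) :
    ∑ u, ∑ v, stdAddChar (-(k * u)) * stdAddChar (-(l * v)) * c (u - v)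
      = (if k + l = 0 then (L : ℂ) else 0) * dft c k := by
  have hshift v : ∑ u, stdAddChar (-(k * u)) * stdAddChar (-(l * v)) * c (u - v)
      = stdAddChar (v * -(k + l)) * ∑ d, c d * stdAddChar (-(k * d)) := by
    rw [Finset.mul_sum, ← Equiv.sum_comp (Equiv.addRight v)]
    refine Finset.sum_congr rfl fun d _ => ?_
    have hexp : -(k * (d + v)) + -(l * v) = v * -(k + l) + -(k * d) := by ring
    rw [Equiv.coe_addRight, add_sub_cancel_right, ← AddChar.map_add_eq_mul, hexp,
      AddChar.map_add_eq_mul]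
    ring
  rw [Finset.sum_comm, Finset.sum_congr rfl fun v _ => hshift v, ← Finset.sum_mul,
    AddChar.sum_mulShift _ (ZMod.isPrimitive_stdAddChar L), dft_eq_sum_stdAddChar]
  simp only [neg_eq_zero, ZMod.card, Nat.cast_ite, Nat.cast_zero]

lemma eq_half_of_mem_posFreq_of_add_eq_zero {k l : ZMod L}
    (hk : k ∈ posFreq L) (hl : l ∈ posFreq L) (hkl : k + l = 0) :
    2 ∣ L ∧ k = ((L / 2 : ℕ) : ZMod L) := by
  simp only [posFreq, Finset.mem_filter, Finset.mem_univ, true_and] at hk hl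
  have hk0 : k ≠ 0 := by rintro rfl; simp at hk
  have hlval : l.val = L - k.val := by
    rw [eq_neg_of_add_eq_zero_right hkl, ZMod.neg_val, if_neg hk0]
  have hkL := ZMod.val_lt k
  have h2k : 2 * k.val = L := by omega
  refine ⟨⟨k.val, h2k.symm⟩, ?_⟩
  rw [show L / 2 = k.val by omega, ZMod.natCast_zmod_val]

lemma sum_sum_stdAddChar_mul_circulant_eq_zero (c : ZMod L → ℂ)
    (hc : 2 ∣ L → dft c ((L / 2 : ℕ) : ZMod L) = 0) {k l : ZMod L}
    (hk : k ∈ posFreq L) (hl : l ∈ posFreq L) :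
    ∑ u, ∑ v, stdAddChar (-(k * u)) * stdAddChar (-(l * v)) * c (u - v) = 0 := by
  rw [sum_sum_stdAddChar_mul_circulant]
  split_ifs with hkl
  · obtain ⟨hL, rfl⟩ := eq_half_of_mem_posFreq_of_add_eq_zero hk hl hkl
    rw [hc hL, mul_zero]
  · exact zero_mul _

variable (L) in
def analyticKernel (t u : ZMod L) : ℂ :=
  (L : ℂ)⁻¹ * ∑ k ∈ posFreq L, 2 * stdAddChar (k * t) * stdAddChar (-(k * u))

lemma analyticSignal_eq_sum_analyticKernel (x : ZMod L → ℝ) (t : ZMod L) :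
    analyticSignal x t = ∑ u, analyticKernel L t u * x u := by
  simp only [analyticSignal, analyticKernel, dft_eq_sum_stdAddChar, fchar_eq_stdAddChar,
    Int.cast_mul, Int.cast_natCast, ZMod.natCast_zmod_val, Finset.mul_sum, Finset.sum_mul]
  rw [Finset.sum_comm]
  exact Finset.sum_congr rfl fun u _ => Finset.sum_congr rfl fun k _ => by ring

lemma sum_sum_analyticKernel_mul_circulant (c : ZMod L → ℂ)
    (hc : 2 ∣ L → dft c ((L / 2 : ℕ) : ZMod L) = 0) (t s : ZMod L) :
    ∑ u, ∑ v, analyticKernel L t u * analyticKernel L s v * c (u - v) = 0 := by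
  simp only [analyticKernel, Finset.mul_sum, Finset.sum_mul]
  -- terminates: each rewrite moves a `posFreq` sum outside a sum over `univ`
  simp_rw [Finset.sum_comm (s := (Finset.univ : Finset (ZMod L))) (t := posFreq L)]
  refine Finset.sum_eq_zero fun l hl => Finset.sum_eq_zero fun k hk => ?_
  calc _ = (L : ℂ)⁻¹ * 2 * stdAddChar (k * t) * ((L : ℂ)⁻¹ * 2 * stdAddChar (l * s))
        * ∑ u, ∑ v, stdAddChar (-(k * u)) * stdAddChar (-(l * v)) * c (u - v) := by
        simp only [Finset.mul_sum]
        exact Finset.sum_congr rfl fun u _ => Finset.sum_congr rfl fun v _ => by ring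
    _ = 0 := by rw [sum_sum_stdAddChar_mul_circulant_eq_zero c hc hk hl, mul_zero]

end Fourier

section Gaussian

variable {Ω : Type*} [MeasurableSpace Ω] {μ : Measure Ω} {ι : Type*} [Fintype ι]

lemma IsRealGaussian.memLp_two {X : Ω → ι → ℝ} (hX : IsRealGaussian μ X) (i : ι) :
    MemLp (fun ω => X ω i) 2 μ := by
  classical
  obtain ⟨m, v, hlaw⟩ := hX fun j => if j = i then 1 else 0
  simp only [ite_mul, one_mul, zero_mul, Finset.sum_ite_eq', Finset.mem_univ, if_true] at hlaw
  have hmeas : AEMeasurable (fun ω => X ω i) μ := by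
    by_contra h
    rw [Measure.map_of_not_aemeasurable h] at hlaw
    exact IsProbabilityMeasure.ne_zero _ hlaw.symm
  refine (memLp_map_measure_iff aestronglyMeasurable_id hmeas).mp ?_
  rw [hlaw]
  exact memLp_id_gaussianReal' 2 (by simp)

lemma IsRealGaussian.isComplexGaussian_sum_mul {κ : Type*} [Fintype κ] {X : Ω → ι → ℝ}
    (hX : IsRealGaussian μ X) (A : κ → ι → ℂ) :
    IsComplexGaussian μ (fun ω t => ∑ u, A t u * X ω u) := by
  intro a
  obtain ⟨m, v, hlaw⟩ := hX fun u => (∑ t, a t * A t u).re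
  refine ⟨m, v, Eq.trans ?_ hlaw⟩
  congr 1
  funext ω
  simp only [Finset.mul_sum, Finset.sum_mul, Complex.re_sum]
  rw [Finset.sum_comm]
  simp only [← mul_assoc, Complex.re_mul_ofReal]

lemma integral_sum_mul_sum {X : Ω → ι → ℝ}
    (hX : ∀ u v, Integrable (fun ω => X ω u * X ω v) μ) (A B : ι → ℂ) :
    ∫ ω, (∑ u, A u * X ω u) * (∑ v, B v * X ω v) ∂μ
      = ∑ u, ∑ v, A u * B v * ∫ ω, X ω u * X ω v ∂μ := by
  have hexpand ω : (∑ u, A u * X ω u) * (∑ v, B v * X ω v)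
      = ∑ u, ∑ v, A u * B v * ((X ω u * X ω v : ℝ) : ℂ) := by
    rw [Finset.sum_mul_sum]
    exact Finset.sum_congr rfl fun u _ => Finset.sum_congr rfl fun v _ => by push_cast; ring
  have hint u v : Integrable (fun ω => A u * B v * ((X ω u * X ω v : ℝ) : ℂ)) μ :=
    (hX u v).ofReal.const_mul _
  simp_rw [hexpand]
  rw [integral_finsetSum _ fun u _ => integrable_finsetSum _ fun v _ => hint u v]
  refine Finset.sum_congr rfl fun u _ => ?_
  rw [integral_finsetSum _ fun v _ => hint u v]
  simp_rw [integral_const_mul, integral_complex_ofReal]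

end Gaussian

theorem analyticSignal_circular_gaussian_general
    {Ω : Type*} [MeasurableSpace Ω] (μ : Measure Ω)
    {L : ℕ} [NeZero L] (X : Ω → ZMod L → ℝ)
    (hGauss : IsRealGaussian μ X)
    (c : ZMod L → ℝ) (S : ZMod L → ℂ)
    (hWSS : ∀ t s : ZMod L, ∫ ω, X ω t * X ω s ∂μ = c (t - s))
    (hspec : ∀ k : ZMod L, S k = dft (fun u => (c u : ℂ)) k)
    (hShalf : ∀ h : 2 ∣ L, S ((L / 2 : ℕ) : ZMod L) = 0)
    (Z : Ω → ZMod L → ℂ) (hZ : ∀ ω t, Z ω t = analyticSignal (X ω) t) :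
    IsComplexGaussian μ Z ∧ ∀ t s : ZMod L, ∫ ω, Z ω t * Z ω s ∂μ = 0 := by
  obtain rfl : Z = fun ω t => ∑ u, analyticKernel L t u * X ω u :=
    funext₂ fun ω t => (hZ ω t).trans (analyticSignal_eq_sum_analyticKernel _ _)
  refine ⟨hGauss.isComplexGaussian_sum_mul _, fun t s => ?_⟩
  have hint u v : Integrable (fun ω => X ω u * X ω v) μ :=
    (hGauss.memLp_two u).integrable_mul (hGauss.memLp_two v)
  rw [integral_sum_mul_sum hint]
  simp_rw [hWSS]
  exact sum_sum_analyticKernel_mul_circulant _ (fun h => (hspec _).symm.trans (hShalf h)) t s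

/-- if `X` is a zero-mean wide-sense stationary real Gaussian signal whose power
spectrum `S` vanishes at frequency `0` (and at `L/2` when `L` is even), then its analytic
signal `Z` is a circular complex Gaussian vector: it is Gaussian and its relation matrix
`E[Z_t Z_s]` vanishes identically. -/
theorem analyticSignal_circular_gaussian
    {Ω : Type*} [MeasurableSpace Ω] (μ : Measure Ω) [IsProbabilityMeasure μ]
    {L : ℕ} [NeZero L] (X : Ω → ZMod L → ℝ)
    (hGauss : IsRealGaussian μ X)
    (hmean : ∀ t, ∫ ω, X ω t ∂μ = 0)
    (c : ZMod L → ℝ) (S : ZMod L → ℂ)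
    (hWSS : ∀ t s : ZMod L, ∫ ω, X ω t * X ω s ∂μ = c (t - s))
    (hspec : ∀ k : ZMod L, S k = dft (fun u => (c u : ℂ)) k)
    (hS0 : S 0 = 0)
    (hShalf : ∀ h : 2 ∣ L, S ((L / 2 : ℕ) : ZMod L) = 0)
    (Z : Ω → ZMod L → ℂ) (hZ : ∀ ω t, Z ω t = analyticSignal (X ω) t) :
    IsComplexGaussian μ Z ∧ ∀ t s : ZMod L, ∫ ω, Z ω t * Z ω s ∂μ = 0 :=
  analyticSignal_circular_gaussian_general μ X hGauss c S hWSS hspec hShalf Z hZ
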